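/- arXiv:0907.1367 — 7 statements merged into one kernel-verified Lean document; each statement's English description precedes it below -/
import Mathlib

section
/- Let λ ∈ ℂ be a nonzero complex number which is not a root of unity, let k, m ∈ ℂ with k ≠ 1, and let h be a Laurent polynomial over ℂ satisfying the identity k·h(x) − λ·h(λx) = m·x⁻¹ (as Laurent polynomials). Then there exist n ∈ ℤ and μ ∈ ℂ such that h(x) = μ·xⁿ + (m/(k−1))·x⁻¹; moreover, if μ ≠ 0 and n ≠ −1, then k = λ^(n+1). -/
/-!
Comparing coefficients, the equation reads `(k - λ^(j+1)) h_j = m δ_{j,-1}`. Hence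
`h_{-1} = m/(k-1)`, and every other nonzero coefficient `h_j` forces `k = λ^(j+1)`. As `λ` is not
a root of unity, `j ↦ λ^(j+1)` is injective, so at most one such `j` exists.
-/

open LaurentPolynomial

/-- The Laurent polynomial `x ↦ h (c * x)`, i.e. `∑ c^j h_j x^j`. -/
noncomputable def LaurentPolynomial.scale (c : ℂ) (h : LaurentPolynomial ℂ) :
    LaurentPolynomial ℂ :=
  Finsupp.sum h.coeff fun j a => LaurentPolynomial.C (c ^ j * a) * LaurentPolynomial.T j

theorem zpow_injective_of_pow_ne_one {G₀ : Type*} [GroupWithZero G₀] {a : G₀} (ha0 : a ≠ 0)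
    (ha : ∀ N : ℕ, 0 < N → a ^ N ≠ 1) : Function.Injective (a ^ · : ℤ → G₀) := by
  have hu : ¬IsOfFinOrder (Units.mk0 a ha0) := by
    rw [← Units.isOfFinOrder_val, isOfFinOrder_iff_pow_eq_one]
    rintro ⟨N, hN, hpow⟩
    exact ha N hN hpow
  intro m n hmn
  refine injective_zpow_iff_not_isOfFinOrder.mpr hu (Units.ext ?_)
  simpa only [Units.val_zpow_eq_zpow_val, Units.val_mk0] using hmn

namespace LaurentPolynomial

theorem coeff_C_mul {R : Type*} [Semiring R] (a : R) (f : R[T;T⁻¹]) (n : ℤ) :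
    (C a * f).coeff n = a * f.coeff n :=
  AddMonoidAlgebra.coeff_single_zero_mul f a n

theorem exists_eq_C_mul_T_of_subsingleton_support {R : Type*} [Semiring R] {f : R[T;T⁻¹]}
    (hf : (f.coeff.support : Set ℤ).Subsingleton) : ∃ n, f = C (f.coeff n) * T n := by
  rcases f.coeff.support.eq_empty_or_nonempty with hempty | ⟨n, hn⟩
  · refine ⟨0, ?_⟩
    rw [Finsupp.support_eq_empty, AddMonoidAlgebra.coeff_eq_zero] at hempty
    simp [hempty]
  · refine ⟨n, ?_⟩
    rw [← single_eq_C_mul_T, ← AddMonoidAlgebra.coeff_inj, AddMonoidAlgebra.coeff_single,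
      ← Finsupp.support_subset_singleton]
    exact fun j hj => Finset.mem_singleton.mpr (hf hj hn)

theorem coeff_scale (c : ℂ) (f : ℂ[T;T⁻¹]) (n : ℤ) :
    (scale c f).coeff n = c ^ n * f.coeff n := by
  simp only [scale, Finsupp.sum, ← single_eq_C_mul_T, AddMonoidAlgebra.coeff_sum,
    AddMonoidAlgebra.coeff_single, Finsupp.finsetSum_apply, Finsupp.single_apply]
  rw [Finset.sum_ite_eq']
  split_ifs with hn
  · rfl
  · rw [Finsupp.notMem_support_iff.mp hn, mul_zero]

theorem coeff_C_mul_sub_C_mul_scale {c : ℂ} (hc : c ≠ 0) (k : ℂ) (f : ℂ[T;T⁻¹]) (n : ℤ) :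
    (C k * f - C c * scale c f).coeff n = (k - c ^ (n + 1)) * f.coeff n := by
  rw [AddMonoidAlgebra.coeff_sub, Finsupp.sub_apply, coeff_C_mul, coeff_C_mul, coeff_scale,
    zpow_add_one₀ hc]
  ring

end LaurentPolynomial

/-- If `λ` is not a root of unity, `k ≠ 1`, and a Laurent polynomial `h` satisfies
`k·h(x) − λ·h(λx) = m·x⁻¹`, then `h(x) = μ·xⁿ + (m/(k−1))·x⁻¹` for some `n ∈ ℤ`, `μ ∈ ℂ`;
moreover if `μ ≠ 0` and `n ≠ −1` then `k = λ^(n+1)`. -/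
theorem stmt0 (lam : ℂ) (hlam0 : lam ≠ 0) (hlam : ∀ N : ℕ, 0 < N → lam ^ N ≠ 1)
    (k m : ℂ) (hk : k ≠ 1) (h : LaurentPolynomial ℂ)
    (heq : LaurentPolynomial.C k * h - LaurentPolynomial.C lam * LaurentPolynomial.scale lam h
      = LaurentPolynomial.C m * LaurentPolynomial.T (-1)) :
    ∃ (n : ℤ) (μ : ℂ),
      h = LaurentPolynomial.C μ * LaurentPolynomial.T n
        + LaurentPolynomial.C (m / (k - 1)) * LaurentPolynomial.T (-1) ∧
      (μ ≠ 0 → n ≠ -1 → k = lam ^ (n + 1)) := by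
  set s : ℂ[T;T⁻¹] := C (m / (k - 1)) * T (-1)
  have hcoeff (j : ℤ) : (k - lam ^ (j + 1)) * (h - s).coeff j = 0 := by
    have hj := congrArg (·.coeff j) heq
    simp only [coeff_C_mul_sub_C_mul_scale hlam0] at hj
    rw [AddMonoidAlgebra.coeff_sub, Finsupp.sub_apply, mul_sub, hj]
    simp only [s, coeff_C_mul, T_apply]
    split_ifs with hj1
    · subst hj1
      field_simp [sub_ne_zero.mpr hk]
      simp
    · simp
  have hsupp : ((h - s).coeff.support : Set ℤ) ⊆ {j | k = lam ^ (j + 1)} := fun j hj =>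
    sub_eq_zero.mp ((mul_eq_zero.mp (hcoeff j)).resolve_right (Finsupp.mem_support_iff.mp hj))
  have hsubsingleton : {j : ℤ | k = lam ^ (j + 1)}.Subsingleton := fun i hi j hj =>
    add_right_cancel (zpow_injective_of_pow_ne_one hlam0 hlam (hi.symm.trans hj))
  obtain ⟨n, hn⟩ := exists_eq_C_mul_T_of_subsingleton_support (hsubsingleton.anti hsupp)
  exact ⟨n, (h - s).coeff n, by rw [← hn, sub_add_cancel],
    fun hμ _ => hsupp (Finsupp.mem_support_iff.mpr hμ)⟩
end

section
/- Let P, Q ∈ ℂ[X] be nonzero coprime polynomials, and suppose there exists a polynomial q ∈ ℂ[X] such that P′·Q − P·Q′ = q·P·Q, where P′ denotes the formal derivative of P. Then P and Q are both constant polynomials. Equivalently, a nonzero rational function whose logarithmic derivative is a polynomial is constant. -/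
open Polynomial

lemma aux_deriv_zero (P : Polynomial ℂ) (hPdvd : P ∣ P.derivative) : P.derivative = 0 := by
  by_contra h
  have hn : P.natDegree ≠ 0 := fun h0 => by
    rw [Polynomial.eq_C_of_natDegree_eq_zero h0] at h; simp at h
  have h1 := Polynomial.natDegree_le_natDegree (Polynomial.degree_le_of_dvd hPdvd h)
  have h2 := Polynomial.natDegree_derivative_lt hn
  omega

/-- A nonzero rational function `P/Q` (with `P, Q` coprime) whose logarithmic
derivative `(P′Q − PQ′)/(PQ)` is a polynomial is constant: if
`P′·Q − P·Q′ = q·P·Q` then `P` and `Q` are constant. -/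
theorem stmt4 (P Q : Polynomial ℂ) (hP : P ≠ 0) (hQ : Q ≠ 0)
    (hco : IsCoprime P Q) (q : Polynomial ℂ)
    (heq : P.derivative * Q - P * Q.derivative = q * P * Q) :
    (∃ a : ℂ, P = Polynomial.C a) ∧ (∃ b : ℂ, Q = Polynomial.C b) := by
  have hPdvd : P ∣ P.derivative :=
    hco.dvd_of_dvd_mul_right ⟨q * Q + Q.derivative, by linear_combination heq⟩
  have hQdvd : Q ∣ Q.derivative :=
    hco.symm.dvd_of_dvd_mul_right ⟨P.derivative - q * P, by linear_combination -heq⟩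
  exact ⟨⟨P.coeff 0, Polynomial.eq_C_of_natDegree_eq_zero
      (Polynomial.natDegree_eq_zero_of_derivative_eq_zero (aux_deriv_zero P hPdvd))⟩,
    ⟨Q.coeff 0, Polynomial.eq_C_of_natDegree_eq_zero
      (Polynomial.natDegree_eq_zero_of_derivative_eq_zero (aux_deriv_zero Q hQdvd))⟩⟩
end

section
/- Let M : ℂ² → ℂ² be a ℂ-linear endomorphism that is not diagonalizable, let ζ ∈ ℂ be an eigenvalue of M, and let Λ ⊂ ℂ² be a subgroup (ℤ-submodule) that is free of rank 4 as a ℤ-module and spans ℂ² as a real vector space, with M(Λ) ⊆ Λ. Then the eigenspace E_ζ = ker(M − ζ·id) contains two elements of Λ that are linearly independent over ℝ; that is, the ℤ-module Λ ∩ E_ζ has rank 2 and is a lattice in the complex line E_ζ. -/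
/-!
Put `N = M - ζ`. Since `M` is not diagonalizable on `ℂ²`, its characteristic polynomial is
`(X - ζ)²`, so `N² = 0 ≠ N`. Restricted to the finitely generated `ℤ`-module `Λ`, `M` satisfies a
monic integer polynomial, which kills `M` on all of `ℂ²` because `Λ` spans over `ℝ`; hence `ζ` is
an algebraic integer. Taylor-expanding its minimal polynomial `q ∈ ℤ[X]` around `ζ` and using
`N² = 0` gives `q(M) = q'(ζ) • N`, with `q'(ζ) ≠ 0` by separability. So `q(M)` maps `Λ` into
`Λ ∩ ker N`, and the real span of `q(M)(Λ)` is the complex line `range N`, which has real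
dimension two.
-/

open Polynomial Module Submodule

open scoped IsMulCommutative in
theorem Polynomial.aeval_eq_derivative_smul_of_sq_eq_zero {R A : Type*} [CommRing R] [Ring A]
    [Algebra R A] {p : R[X]} {r : R} (hp : p.IsRoot r) {a : A}
    (ha : (a - algebraMap R A r) ^ 2 = 0) :
    aeval a p = p.derivative.eval r • (a - algebraMap R A r) := by
  set y := a - algebraMap R A r
  -- `A` need not be commutative, so expand inside the commutative subalgebra generated by `y`.
  have := Algebra.isMulCommutative_adjoin R (s := {y}) (by simp)
  let y' : Algebra.adjoin R {y} := ⟨y, Algebra.self_mem_adjoin_singleton R y⟩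
  have key := congrArg Subtype.val
    (aeval_add_of_sq_eq_zero p (algebraMap R _ r) y' (Subtype.ext ha))
  rw [aeval_subalgebra_coe] at key
  simpa [y', y, aeval_algebraMap_apply, hp.eq_zero, Algebra.smul_def] using key

theorem aeval_derivative_minpoly_int_ne_zero {K : Type*} [Field K] [CharZero K] {x : K}
    (hx : IsIntegral ℤ x) : aeval x (derivative (minpoly ℤ x)) ≠ 0 := by
  have hsep : (minpoly ℚ x).Separable := (minpoly.irreducible hx.tower_top).separable
  rw [minpoly.isIntegrallyClosed_eq_field_fractions' ℚ hx] at hsep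
  have h := hsep.aeval_derivative_ne_zero (x := x)
    (by rw [aeval_map_algebraMap ℚ]; exact minpoly.aeval ℤ x)
  rwa [derivative_map, aeval_map_algebraMap ℚ] at h

section

variable {R S V : Type*} [CommRing R] [CommRing S] [Algebra R S] [AddCommGroup V] [Module R V]
  [Module S V] [IsScalarTower R S V] {f : End S V} {Λ : Submodule R V}

theorem Submodule.coe_aeval_restrict (hf : ∀ v ∈ Λ, f v ∈ Λ) (p : R[X]) (w : Λ) :
    (aeval ((f.restrictScalars R).restrict hf) p w : V) = aeval f p w := by
  induction p using Polynomial.induction_on generalizing w with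
  | C a => simp [Module.algebraMap_end_apply]
  | add p q hp hq => simp [hp, hq]
  | monomial n a ih =>
    rw [pow_succ, ← mul_assoc, map_mul _ _ X, map_mul _ _ X, aeval_X, aeval_X, End.mul_apply,
      End.mul_apply]
    exact ih _

theorem Submodule.aeval_apply_mem (hf : ∀ v ∈ Λ, f v ∈ Λ) (p : R[X]) {v : V} (hv : v ∈ Λ) :
    aeval f p v ∈ Λ :=
  coe_aeval_restrict hf p ⟨v, hv⟩ ▸ SetLike.coe_mem _

theorem Module.End.HasEigenvector.isIntegral [IsDomain S] [IsTorsionFree S V] {μ : S} {x : V}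
    (hx : f.HasEigenvector μ x) (hf : IsIntegral R f) : IsIntegral R μ := by
  obtain ⟨p, hmonic, hp⟩ := hf
  refine ⟨p, hmonic, ?_⟩
  have := aeval_apply_of_hasEigenvector (p := p.map (algebraMap R S)) hx
  rw [aeval_map_algebraMap, aeval_def, hp, eval_map, LinearMap.zero_apply, eq_comm,
    smul_eq_zero] at this
  exact this.resolve_right hx.2

end

theorem Module.End.isIntegral_of_mapsTo_of_span_eq_top {K S V : Type*} [CommRing K]
    [CommRing S] [Algebra K S] [AddCommGroup V] [Module K V] [Module S V] [IsScalarTower K S V]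
    {f : End S V} {Λ : Submodule ℤ V} [Module.Finite ℤ Λ] (hspan : span K (Λ : Set V) = ⊤)
    (hf : ∀ v ∈ Λ, f v ∈ Λ) : IsIntegral ℤ f := by
  obtain ⟨p, hmonic, hp⟩ :=
    Algebra.IsIntegral.isIntegral (R := ℤ) ((f.restrictScalars ℤ).restrict hf)
  rw [← aeval_def] at hp
  refine ⟨p, hmonic, ?_⟩
  rw [← aeval_def]
  refine LinearMap.restrictScalars_injective K (LinearMap.ext_on hspan fun v hv ↦ ?_)
  simpa [hp] using (coe_aeval_restrict hf p ⟨v, hv⟩).symm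

namespace Module.End

variable {K V : Type*} [Field K] [AddCommGroup V] [Module K V] [FiniteDimensional K V]

theorem exists_basis_of_injective_of_hasEigenvalue {ι : Type*} [Fintype ι]
    (hV : Fintype.card ι = finrank K V) {f : End K V} {μ : ι → K} (hμ : Function.Injective μ)
    (h : ∀ i, f.HasEigenvalue (μ i)) : ∃ b : Basis ι K V, ∀ i, f (b i) = μ i • b i := by
  choose v hv using fun i ↦ (h i).exists_hasEigenvector
  have hli := f.eigenvectors_linearIndependent' μ hμ v hv
  refine ⟨basisOfLinearIndependentOfCardEqFinrank' v hli hV, fun i ↦ ?_⟩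
  simpa [basisOfLinearIndependentOfCardEqFinrank'] using (hv i).apply_eq_smul

theorem sq_sub_algebraMap_eq_zero_of_finrank_eq_two (hV : finrank K V = 2) {f : End K V} {μ : K}
    (hμ : f.HasEigenvalue μ)
    (hf : ¬ ∃ (b : Basis (Fin 2) K V) (d : Fin 2 → K), ∀ i, f (b i) = d i • b i) :
    (f - algebraMap K (End K V) μ) ^ 2 = 0 := by
  obtain ⟨r, hr⟩ := dvd_iff_isRoot.2 ((hasEigenvalue_iff_isRoot_charpoly f μ).1 hμ)
  have hr_monic : r.Monic := (monic_X_sub_C μ).of_mul_monic_left (hr ▸ f.charpoly_monic)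
  have hr_deg : r.natDegree = 1 := by
    have := congrArg natDegree hr
    rw [f.charpoly_natDegree, hV, (monic_X_sub_C μ).natDegree_mul hr_monic,
      natDegree_X_sub_C] at this
    omega
  set ν := -r.coeff 0
  have hr' : r = X - C ν := by rw [hr_monic.eq_X_add_C hr_deg]; simp [ν, sub_eq_add_neg]
  have hν : f.HasEigenvalue ν := (hasEigenvalue_iff_isRoot_charpoly f ν).2 (by simp [hr, hr'])
  obtain rfl : ν = μ := by
    by_contra hne
    obtain ⟨b, hb⟩ := exists_basis_of_injective_of_hasEigenvalue (f := f) (μ := ![μ, ν])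
      (by simp [hV]) (by simpa [Function.Injective, Fin.forall_fin_two] using ⟨Ne.symm hne, hne⟩)
      (by simp [Fin.forall_fin_two, hμ, hν])
    exact hf ⟨b, _, hb⟩
  have := f.aeval_self_charpoly
  rwa [hr, hr', ← sq, map_pow, map_sub, aeval_X, aeval_C] at this

end Module.End

theorem exists_linearIndependent_pair_of_span_eq {V : Type*} [AddCommGroup V] [Module ℂ V]
    [Module ℝ V] [IsScalarTower ℝ ℂ V] {s : Set V} {p : Submodule ℂ V}
    (hs : span ℝ s = p.restrictScalars ℝ) (hp : p ≠ ⊥) :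
    ∃ v ∈ s, ∃ w ∈ s, LinearIndependent ℝ ![v, w] := by
  obtain ⟨v, hvs, hv0⟩ : ∃ v ∈ s, v ≠ 0 := by
    by_contra! h
    exact hp (by rw [← restrictScalars_eq_bot_iff ℝ, ← hs, span_eq_bot]; exact h)
  obtain ⟨w, hws, hw⟩ : ∃ w ∈ s, ∀ a : ℝ, a • v ≠ w := by
    by_contra! h
    have hIv : Complex.I • v ∈ span ℝ s := by
      rw [hs]
      exact p.smul_mem _ (hs ▸ subset_span hvs : v ∈ p.restrictScalars ℝ)
    obtain ⟨a, ha⟩ :=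
      mem_span_singleton.1 (span_le.2 (fun w hw ↦ mem_span_singleton.2 (h w hw)) hIv)
    rw [← algebraMap_smul ℂ a v] at ha
    simpa using congrArg Complex.im (smul_left_injective ℂ hv0 ha)
  exact ⟨v, hvs, w, hws, (LinearIndependent.pair_iff' hv0).2 hw⟩

theorem exists_linearIndependent_pair_mem_lattice_eigenspace {V : Type*} [AddCommGroup V]
    [Module ℂ V] [Module ℝ V] [IsScalarTower ℝ ℂ V] {M : End ℂ V} {ζ : ℂ}
    (hN : (M - algebraMap ℂ (End ℂ V) ζ) ^ 2 = 0) (hN0 : M - algebraMap ℂ (End ℂ V) ζ ≠ 0)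
    {Λ : Submodule ℤ V} [Module.Finite ℤ Λ] (hspan : span ℝ (Λ : Set V) = ⊤)
    (hM : ∀ v ∈ Λ, M v ∈ Λ) :
    ∃ v w : V, v ∈ Λ ∧ w ∈ Λ ∧ M v = ζ • v ∧ M w = ζ • w ∧ LinearIndependent ℝ ![v, w] := by
  set N := M - algebraMap ℂ (End ℂ V) ζ
  have hker : ∀ y, N y = 0 → M y = ζ • y := fun y hy ↦ by
    simpa [N, sub_eq_zero, Module.algebraMap_end_apply] using hy
  have hNN : ∀ y, N (N y) = 0 := fun y ↦ by rw [← End.mul_apply, ← sq, hN, LinearMap.zero_apply]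
  obtain ⟨x, hx⟩ : ∃ x, N x ≠ 0 := by
    by_contra! h
    exact hN0 (LinearMap.ext h)
  have hζ : IsIntegral ℤ ζ :=
    End.HasEigenvector.isIntegral ⟨End.mem_eigenspace_iff.2 (hker _ (hNN x)), hx⟩
      (End.isIntegral_of_mapsTo_of_span_eq_top hspan hM)
  set T := aeval M (minpoly ℤ ζ) with hTdef
  have hT : T = aeval ζ (derivative (minpoly ℤ ζ)) • N := by
    rw [hTdef, ← aeval_map_algebraMap ℂ M, aeval_eq_derivative_smul_of_sq_eq_zero _ hN]
    · rw [derivative_map, eval_map_algebraMap]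
    · rw [IsRoot, eval_map_algebraMap, minpoly.aeval]
  have hc := aeval_derivative_minpoly_int_ne_zero hζ
  have hspanT : span ℝ (T '' Λ) = (LinearMap.range T).restrictScalars ℝ := by
    rw [← T.coe_restrictScalars ℝ, span_image, hspan, Submodule.map_top,
      LinearMap.range_restrictScalars]
  obtain ⟨_, ⟨v, hv, rfl⟩, _, ⟨w, hw, rfl⟩, hvw⟩ :=
    exists_linearIndependent_pair_of_span_eq hspanT (by simpa [hT, LinearMap.range_eq_bot, hc])
  refine ⟨T v, T w, aeval_apply_mem hM _ hv, aeval_apply_mem hM _ hw, hker _ ?_, hker _ ?_, hvw⟩ <;>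
    simp [hT, hNN]

/-- If `M` is a non-diagonalizable `ℂ`-linear endomorphism of `ℂ²` with eigenvalue
`ζ`, preserving a subgroup `Λ ⊆ ℂ²` which is free of rank `4` over `ℤ` and spans
`ℂ²` over `ℝ`, then the eigenspace `ker (M − ζ·id)` contains two elements of `Λ`
which are linearly independent over `ℝ`. -/
theorem stmt7 (M : Module.End ℂ (Fin 2 → ℂ))
    (hnd : ¬ ∃ (b : Module.Basis (Fin 2) ℂ (Fin 2 → ℂ)) (d : Fin 2 → ℂ),
      ∀ i, M (b i) = d i • b i)
    (ζ : ℂ) (hζ : Module.End.HasEigenvalue M ζ)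
    (Λ : Submodule ℤ (Fin 2 → ℂ))
    (hfree : Nonempty (Module.Basis (Fin 4) ℤ Λ))
    (hspan : Submodule.span ℝ (Λ : Set (Fin 2 → ℂ)) = ⊤)
    (hM : ∀ v ∈ Λ, M v ∈ Λ) :
    ∃ v w : Fin 2 → ℂ, v ∈ Λ ∧ w ∈ Λ ∧ M v = ζ • v ∧ M w = ζ • w ∧
      LinearIndependent ℝ ![v, w] := by
  obtain ⟨b⟩ := hfree
  have : Module.Finite ℤ Λ := .of_basis b
  have hN0 : M - algebraMap ℂ _ ζ ≠ 0 := fun h ↦ hnd ⟨Pi.basisFun ℂ (Fin 2), fun _ ↦ ζ,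
    fun i ↦ by simpa [sub_eq_zero] using LinearMap.congr_fun h (Pi.basisFun ℂ (Fin 2) i)⟩
  exact exists_linearIndependent_pair_mem_lattice_eigenspace
    (End.sq_sub_algebraMap_eq_zero_of_finrank_eq_two (by simp) hζ hnd) hN0 hspan hM
end

section
/- Let f be a monic polynomial with real coefficients such that every coefficient of f² is a rational number. Then every coefficient of f is a rational number. -/
open Polynomial

private lemma aux_sqrt_rat (g : Polynomial ℝ) (h0 : g.coeff 0 = 1)
    (hsq : ∀ n : ℕ, (g ^ 2).coeff n ∈ (algebraMap ℚ ℝ).fieldRange) :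
    ∀ n : ℕ, g.coeff n ∈ (algebraMap ℚ ℝ).fieldRange := by
  intro n
  induction n using Nat.strong_induction_on with
  | _ n ih =>
    match n, ih with
    | 0, _ => exact h0 ▸ one_mem _
    | (m+1), ih =>
      have key : g.coeff (m+1) =
          ((g ^ 2).coeff (m+1)
            - ∑ i ∈ Finset.range m, g.coeff (i+1) * g.coeff (m - i)) / 2 := by
        have h2 : (g ^ 2).coeff (m+1)
            = (∑ i ∈ Finset.range m, g.coeff (i+1) * g.coeff (m - i))
              + 2 * g.coeff (m+1) := by
          rw [sq, coeff_mul, Finset.Nat.sum_antidiagonal_eq_sum_range_succ_mk,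
            Finset.sum_range_succ, Finset.sum_range_succ']
          simp only [Nat.add_sub_cancel, h0, Nat.succ_sub_succ_eq_sub,
            Nat.sub_zero, Nat.sub_self, mul_one, one_mul]
          ring
        rw [h2]; ring
      rw [key]
      refine Subfield.div_mem _ (Subfield.sub_mem _ (hsq _)
        (Subfield.sum_mem _ fun i hi => Subfield.mul_mem _ (ih (i+1) ?_) (ih (m-i) ?_)))
        ⟨2, by norm_num⟩
      · exact Nat.succ_lt_succ (Finset.mem_range.mp hi)
      · exact Nat.lt_succ_of_le (Nat.sub_le _ _)

/-- If `f` is a monic real polynomial all of whose square's coefficients are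
rational, then all coefficients of `f` are rational. -/
theorem stmt8 (f : Polynomial ℝ) (hf : f.Monic)
    (hsq : ∀ n : ℕ, ∃ q : ℚ, (f ^ 2).coeff n = (q : ℝ)) :
    ∀ n : ℕ, ∃ q : ℚ, f.coeff n = (q : ℝ) := by
  have hmem : ∀ x : ℝ, x ∈ (algebraMap ℚ ℝ).fieldRange ↔ ∃ q : ℚ, x = (q : ℝ) := by
    intro x
    simp [RingHom.mem_fieldRange, eq_ratCast, eq_comm]
  have h0 : f.reverse.coeff 0 = 1 := by
    rw [coeff_zero_reverse]; exact hf
  have hsq' : ∀ n : ℕ, (f.reverse ^ 2).coeff n ∈ (algebraMap ℚ ℝ).fieldRange := by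
    intro n
    rw [sq, ← reverse_mul_of_domain, ← sq, coeff_reverse]
    exact (hmem _).mpr (hsq _)
  have hrev := aux_sqrt_rat f.reverse h0 hsq'
  intro n
  by_cases hn : n ≤ f.natDegree
  · have : f.coeff n = f.reverse.coeff (f.natDegree - n) := by
      rw [coeff_reverse, revAt_le (Nat.sub_le _ _), Nat.sub_sub_self hn]
    rw [this]
    exact (hmem _).mp (hrev _)
  · refine ⟨0, ?_⟩
    rw [coeff_eq_zero_of_natDegree_lt (lt_of_not_ge hn)]
    simp
end

section
/- Let n ∈ ℤ with n ≠ −1, let k, m, μ ∈ ℂ with k ≠ 1, and define φ : ℂ² → ℂ² by φ(x,y) = (exp(x/(n+1)), exp(y − m·x/((n+1)(k−1)))). Then φ is holomorphic, its values have both coordinates nonzero, and for every (x,y) ∈ ℂ² and every tangent vector (u,v) ∈ ℂ², writing (X,Y) = φ(x,y) and (U,V) for the image of (u,v) under the (complex Fréchet) derivative of φ at (x,y), one has V/Y + (m/((k−1)·X))·U + μ·Xⁿ·U = v + (μ·e^x/(n+1))·u, where Xⁿ is the integer power of the nonzero complex number X. In other words, φ pulls back the 1-form dy/y + (m/((k−1)x))dx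 + μ·xⁿdx on ℂ*×ℂ* to the 1-form dy + (μ·e^x/(n+1))dx on ℂ². -/
/-!
`φ` is the coordinatewise exponential of the linear map `(x, y) ↦ (x/(n+1), y - b x)` with
`b = m/((n+1)(k-1))`, so `dY/Y` pulls back to `dy - b dx` and `(m/((k-1)X)) dX` to `b dx`,
which cancel. What remains is `μ Xⁿ dX = μ Xⁿ⁺¹ dx/(n+1)`, and `Xⁿ⁺¹ = eˣ`.
-/

open Complex ContinuousLinearMap

noncomputable def expChart (a b : ℂ) (p : ℂ × ℂ) : ℂ × ℂ :=
  (exp (a * p.1), exp (p.2 - b * p.1))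

theorem hasFDerivAt_expChart (a b : ℂ) (p : ℂ × ℂ) :
    HasFDerivAt (expChart a b)
      ((exp (a * p.1) • a • fst ℂ ℂ ℂ).prod
        (exp (p.2 - b * p.1) • (snd ℂ ℂ ℂ - b • fst ℂ ℂ ℂ))) p :=
  ((a • fst ℂ ℂ ℂ).hasFDerivAt.cexp).prodMk ((snd ℂ ℂ ℂ - b • fst ℂ ℂ ℂ).hasFDerivAt.cexp)

theorem differentiable_expChart (a b : ℂ) : Differentiable ℂ (expChart a b) :=
  fun p => (hasFDerivAt_expChart a b p).differentiableAt

theorem fderiv_expChart_apply (a b x y u v : ℂ) :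
    fderiv ℂ (expChart a b) (x, y) (u, v) =
      (exp (a * x) * (a * u), exp (y - b * x) * (v - b * u)) := by
  simp [(hasFDerivAt_expChart a b (x, y)).fderiv]

theorem exp_inv_mul_zpow_add_one {n : ℤ} (hn : n ≠ -1) (x : ℂ) :
    exp (((n : ℂ) + 1)⁻¹ * x) ^ (n + 1) = exp x := by
  have hc : (n : ℂ) + 1 ≠ 0 := by exact_mod_cast (by omega : n + 1 ≠ 0)
  rw [← exp_int_mul]
  push_cast
  field_simp

theorem stmt10_general (n : ℤ) (hn : n ≠ -1) (k m μ : ℂ)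
    (φ : ℂ × ℂ → ℂ × ℂ)
    (hφ : φ = fun p => (Complex.exp (p.1 / ((n : ℂ) + 1)),
      Complex.exp (p.2 - m * p.1 / (((n : ℂ) + 1) * (k - 1))))) :
    Differentiable ℂ φ ∧
    (∀ p : ℂ × ℂ, (φ p).1 ≠ 0 ∧ (φ p).2 ≠ 0) ∧
    ∀ x y u v : ℂ,
      (fderiv ℂ φ (x, y) (u, v)).2 / (φ (x, y)).2
        + (m / ((k - 1) * (φ (x, y)).1)) * (fderiv ℂ φ (x, y) (u, v)).1
        + μ * (φ (x, y)).1 ^ n * (fderiv ℂ φ (x, y) (u, v)).1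
      = v + (μ * Complex.exp x / ((n : ℂ) + 1)) * u := by
  set c : ℂ := (n : ℂ) + 1
  have hφ : φ = expChart c⁻¹ (m / (c * (k - 1))) := by
    rw [hφ]; funext p; simp only [expChart]; ring_nf
  subst hφ
  refine ⟨differentiable_expChart _ _, fun p => ⟨exp_ne_zero _, exp_ne_zero _⟩, fun x y u v => ?_⟩
  have hX : exp (c⁻¹ * x) ≠ 0 := exp_ne_zero _
  have hpow := exp_inv_mul_zpow_add_one hn x
  rw [zpow_add_one₀ hX] at hpow
  simp only [fderiv_expChart_apply, expChart]
  rw [mul_div_cancel_left₀ _ (exp_ne_zero _), ← hpow]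
  field_simp
  ring

/-- The map `φ(x,y) = (exp(x/(n+1)), exp(y − m·x/((n+1)(k−1))))` is holomorphic
with values in `ℂ* × ℂ*`, and it pulls back the 1-form
`dy/y + (m/((k−1)x))dx + μ·xⁿ dx` to the 1-form `dy + (μ·eˣ/(n+1))dx`. -/
theorem stmt10 (n : ℤ) (hn : n ≠ -1) (k m μ : ℂ) (hk : k ≠ 1)
    (φ : ℂ × ℂ → ℂ × ℂ)
    (hφ : φ = fun p => (Complex.exp (p.1 / ((n : ℂ) + 1)),
      Complex.exp (p.2 - m * p.1 / (((n : ℂ) + 1) * (k - 1))))) :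
    Differentiable ℂ φ ∧
    (∀ p : ℂ × ℂ, (φ p).1 ≠ 0 ∧ (φ p).2 ≠ 0) ∧
    ∀ x y u v : ℂ,
      (fderiv ℂ φ (x, y) (u, v)).2 / (φ (x, y)).2
        + (m / ((k - 1) * (φ (x, y)).1)) * (fderiv ℂ φ (x, y) (u, v)).1
        + μ * (φ (x, y)).1 ^ n * (fderiv ℂ φ (x, y) (u, v)).1
      = v + (μ * Complex.exp x / ((n : ℂ) + 1)) * u :=
  stmt10_general n hn k m μ φ hφ
end

section
/- Let n ∈ ℤ with n ≠ −1, let m, k ∈ ℤ with k ≠ 1, let μ ∈ ℂ, set λ = exp(μ/(n+1)) and ν = m·μ/((n+1)(k−1)), and define φ : ℂ² → ℂ² by φ(x,y) = (exp(x/(n+1)), exp(y − m·x/((n+1)(k−1)))). Let Φ(s,t) = (λ·s, s^m·t^k), defined for s, t ∈ ℂ* using integer powers. Then for every (x,y) ∈ ℂ² one has Φ(φ(x,y)) = φ(x + μ, k·y + ν); that is, φ conjugates the affine map (x,y) ↦ (x + μ, k·y + ν) of ℂ² to the monomial-type map Φ(s,t) = (λs, s^m t^k) of ℂ*×ℂ*.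 -/
/-- With `λ = exp(μ/(n+1))` and `ν = mμ/((n+1)(k−1))`, the covering map
`φ(x,y) = (exp(x/(n+1)), exp(y − m·x/((n+1)(k−1))))` conjugates the affine map
`(x,y) ↦ (x+μ, k·y+ν)` of `ℂ²` to the monomial map `Φ(s,t) = (λs, sᵐtᵏ)` of
`ℂ*×ℂ*`: one has `Φ ∘ φ = φ ∘ (affine map)`. -/
theorem stmt11 (n m k : ℤ) (hn : n ≠ -1) (hk : k ≠ 1) (μ lam ν : ℂ)
    (hlam : lam = Complex.exp (μ / ((n : ℂ) + 1)))
    (hν : ν = (m : ℂ) * μ / (((n : ℂ) + 1) * ((k : ℂ) - 1)))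
    (φ : ℂ × ℂ → ℂ × ℂ)
    (hφ : φ = fun p => (Complex.exp (p.1 / ((n : ℂ) + 1)),
      Complex.exp (p.2 - (m : ℂ) * p.1 / (((n : ℂ) + 1) * ((k : ℂ) - 1)))))
    (Φ : ℂ × ℂ → ℂ × ℂ)
    (hΦ : Φ = fun q => (lam * q.1, q.1 ^ m * q.2 ^ k)) :
    ∀ x y : ℂ, Φ (φ (x, y)) = φ (x + μ, (k : ℂ) * y + ν) := by
  have hn1 : ((n : ℂ) + 1) ≠ 0 := by
    intro h
    apply hn
    have : (n : ℂ) = ((-1 : ℤ) : ℂ) := by push_cast; linear_combination h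
    exact_mod_cast Int.cast_injective this
  have hk1 : ((k : ℂ) - 1) ≠ 0 := by
    intro h
    apply hk
    have : (k : ℂ) = ((1 : ℤ) : ℂ) := by push_cast; linear_combination h
    exact_mod_cast Int.cast_injective this
  intro x y
  subst hφ hΦ hlam hν
  simp only [Prod.mk.injEq, ← Complex.exp_int_mul, ← Complex.exp_add]
  constructor <;> congr 1 <;> field_simp <;> ring
end

section
/- Let f ∈ ℂ[X] be a polynomial of degree at least 2, and let E be a finite subset of ℂ that is totally invariant under f, i.e. {z ∈ ℂ : f(z) ∈ E} = E. Then E has at most one element. -/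
open Polynomial

private lemma stmt12_root_exists (f : Polynomial ℂ) (hf : 2 ≤ f.natDegree) (e : ℂ) :
    ∃ z : ℂ, f.eval z = e := by
  have hdeg : (f - C e).natDegree = f.natDegree := natDegree_sub_C
  have hne : (f - C e).natDegree ≠ 0 := by omega
  have h0 : 0 < (f - C e).degree := by
    rw [Polynomial.degree_eq_natDegree (fun h => by simp [h] at hne)]
    exact_mod_cast Nat.pos_of_ne_zero hne
  obtain ⟨z, hz⟩ := Complex.exists_root h0
  exact ⟨z, by simpa [Polynomial.IsRoot, sub_eq_zero] using hz⟩

/-- A finite subset of `ℂ` which is totally invariant under a polynomial of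
degree at least `2` has at most one element. -/
theorem stmt12 (f : Polynomial ℂ) (hf : 2 ≤ f.natDegree)
    (E : Set ℂ) (hE : E.Finite) (hinv : {z : ℂ | f.eval z ∈ E} = E) :
    E.Subsingleton := by
  have hmem : ∀ z : ℂ, f.eval z ∈ E ↔ z ∈ E := fun z => by
    constructor
    · intro h; rw [← hinv]; exact h
    · intro h; rw [← hinv] at h; exact h
  have hmaps : Set.MapsTo (fun z => f.eval z) E E := fun z hz => (hmem z).2 hz
  have hfne : f ≠ 0 := fun h => by simp [h] at hf
  have hsurj : Set.SurjOn (fun z => f.eval z) E E := by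
    intro e he
    obtain ⟨z, hz⟩ := stmt12_root_exists f hf e
    exact ⟨z, (hmem z).1 (by rw [hz]; exact he), hz⟩
  have hinj : Set.InjOn (fun z => f.eval z) E :=
    ((hE.surjOn_iff_bijOn_of_mapsTo hmaps).1 hsurj).injOn
  -- for each e ∈ E, f - C e has a unique root, of multiplicity natDegree
  have key : ∀ e ∈ E, ∃ a : ℂ, f.eval a = e ∧
      (derivative f).rootMultiplicity a = f.natDegree - 1 := by
    intro e he
    obtain ⟨a, ha⟩ := stmt12_root_exists f hf e
    have haE : a ∈ E := (hmem a).1 (by rw [ha]; exact he)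
    set g := f - C e with hg
    have hgne : g ≠ 0 := fun h => by
      have : f = C e := by rw [hg] at h; linear_combination h
      rw [this] at hf; simp at hf
    have hgdeg : g.natDegree = f.natDegree := natDegree_sub_C
    -- every root of g equals a
    have hroots : ∀ z ∈ g.roots, z = a := by
      intro z hz
      have hze : f.eval z = e := by
        have := (mem_roots hgne).1 hz
        simpa [hg, Polynomial.IsRoot, sub_eq_zero] using this
      have hzE : z ∈ E := (hmem z).1 (by rw [hze]; exact he)
      exact hinj hzE haE (by simp [hze, ha])
    -- card of roots = natDegree over ℂ
    have hcard : g.roots.card = f.natDegree := by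
      rw [← hgdeg]
      exact (Polynomial.splits_iff_card_roots.1 (IsAlgClosed.splits g))
    have haroot : g.IsRoot a := by simp [hg, Polynomial.IsRoot, ha]
    have hrepl : g.roots = Multiset.replicate f.natDegree a := by
      apply Multiset.eq_replicate.2 ⟨hcard, hroots⟩
    have hmult : g.rootMultiplicity a = f.natDegree := by
      rw [← Polynomial.count_roots, hrepl, Multiset.count_replicate, if_pos rfl]
    have hder : (derivative g).rootMultiplicity a = f.natDegree - 1 := by
      rw [Polynomial.derivative_rootMultiplicity_of_root haroot, hmult]
    have : derivative g = derivative f := by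
      rw [hg]; simp
    exact ⟨a, ha, by rw [← this]; exact hder⟩
  -- conclude
  intro e1 he1 e2 he2
  obtain ⟨a1, ha1, hm1⟩ := key e1 he1
  obtain ⟨a2, ha2, hm2⟩ := key e2 he2
  have hdne : derivative f ≠ 0 := by
    intro h
    have := Polynomial.natDegree_eq_zero_of_derivative_eq_zero h
    omega
  have hddeg : (derivative f).natDegree ≤ f.natDegree - 1 :=
    Polynomial.natDegree_derivative_le f
  have ha12 : a1 = a2 := by
    by_contra hne
    have h1 : (derivative f).roots.count a1 = f.natDegree - 1 := by
      rw [Polynomial.count_roots]; exact hm1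
    have h2 : (derivative f).roots.count a2 = f.natDegree - 1 := by
      rw [Polynomial.count_roots]; exact hm2
    have hle : (derivative f).roots.card ≤ f.natDegree - 1 :=
      le_trans (Polynomial.card_roots' (derivative f)) hddeg
    have hrep : Multiset.replicate (f.natDegree - 1) a1 ≤ (derivative f).roots :=
      Multiset.le_count_iff_replicate_le.1 (le_of_eq h1.symm)
    have heq : Multiset.replicate (f.natDegree - 1) a1 = (derivative f).roots :=
      Multiset.eq_of_le_of_card_le hrep (by simpa using hle)
    have : (f.natDegree - 1 : ℕ) = 0 := by
      have := h2
      rw [← heq, Multiset.count_replicate, if_neg hne] at this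
      omega
    omega
  rw [← ha1, ← ha2, ha12]
end
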